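/- arXiv:2307.10204 — 2 statements merged into one kernel-verified Lean document; each statement's English description precedes it below -/
import Mathlib

section
/- Let O₁, O₂ be independent Bernoulli random variables with parameters θ₁, θ₂ ∈ (0,1], and let R₁, R₂ ∈ {0,1} be constants. Define Y₁ = O₁·R₁, Y₂ = O₁·O₂·R₁·R₂, and the IPW-weighted gain h_IPW(Y₁,Y₂) = (1/(θ₁θ₂))·2^(Y₁)·(2^(Y₂) - 1) + (1/θ₁)·(2^(Y₁) - 1). Then E[h_IPW(Y₁, Y₂)] = 2^(R₁(1+R₂)) - 1. -/
/-!
For `a ∈ {0, 1}` one has `2 ^ (a * t) - 1 = a * (2 ^ t - 1)` and `a * 2 ^ (a * t) = a * 2 ^ t`.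
Hence the IPW-weighted gain is the linear combination
`(2 ^ R₁ * (2 ^ (R₁ * R₂) - 1) / (θ₁ * θ₂)) * O₁ O₂ + ((2 ^ R₁ - 1) / θ₁) * O₁`,
and independence gives `E[O₁ O₂] = θ₁ θ₂`, `E[O₁] = θ₁`, so the weights cancel and the expectation
is `2 ^ R₁ * 2 ^ (R₁ * R₂) - 1 = 2 ^ (R₁ * (1 + R₂)) - 1`.
-/

open MeasureTheory ProbabilityTheory

section ZeroOrOne

variable {a : ℝ}

lemma rpow_mul_sub_one_of_zero_or_one (ha : a = 0 ∨ a = 1) (b t : ℝ) :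
    b ^ (a * t) - 1 = a * (b ^ t - 1) := by
  rcases ha with rfl | rfl <;> simp

lemma mul_rpow_mul_of_zero_or_one (ha : a = 0 ∨ a = 1) (b t : ℝ) :
    a * b ^ (a * t) = a * b ^ t := by
  rcases ha with rfl | rfl <;> simp

lemma mul_zero_or_one {a' : ℝ} (ha : a = 0 ∨ a = 1) (ha' : a' = 0 ∨ a' = 1) :
    a * a' = 0 ∨ a * a' = 1 := by
  rcases ha with rfl | rfl <;> simp [ha']

end ZeroOrOne

lemma eq_indicator_of_zero_or_one {Ω : Type*} {O : Ω → ℝ} (hO : ∀ ω, O ω = 0 ∨ O ω = 1) :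
    O = {ω | O ω = 1}.indicator 1 := by
  funext ω
  rcases hO ω with h | h <;> simp [h]

section Bernoulli

variable {Ω : Type*} [MeasurableSpace Ω] {μ : Measure Ω} {O : Ω → ℝ}

lemma integrable_of_zero_or_one [IsFiniteMeasure μ] (hO : ∀ ω, O ω = 0 ∨ O ω = 1)
    (hm : Measurable O) : Integrable O μ :=
  .of_bound hm.aestronglyMeasurable 1 <| .of_forall fun ω => by rcases hO ω with h | h <;> simp [h]

lemma integral_eq_of_zero_or_one {θ : ℝ} (hθ : 0 ≤ θ) (hO : ∀ ω, O ω = 0 ∨ O ω = 1)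
    (hm : Measurable O) (hp : μ {ω | O ω = 1} = ENNReal.ofReal θ) : ∫ ω, O ω ∂μ = θ := by
  have hs : MeasurableSet {ω | O ω = 1} := hm (measurableSet_singleton 1)
  conv_lhs => rw [eq_indicator_of_zero_or_one hO]
  rw [integral_indicator_one hs, measureReal_def, hp, ENNReal.toReal_ofReal hθ]

end Bernoulli

theorem two_sided_ipw_unbiased_general
    {Ω : Type*} [MeasurableSpace Ω] (μ : Measure Ω) [IsProbabilityMeasure μ]
    (O₁ O₂ : Ω → ℝ) (θ₁ θ₂ : ℝ)
    (hθ₁ : θ₁ ∈ Set.Ioc (0 : ℝ) 1) (hθ₂ : θ₂ ∈ Set.Ioc (0 : ℝ) 1)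
    (hO₁ : ∀ ω, O₁ ω = 0 ∨ O₁ ω = 1) (hO₂ : ∀ ω, O₂ ω = 0 ∨ O₂ ω = 1)
    (hm₁ : Measurable O₁) (hm₂ : Measurable O₂)
    (hp₁ : μ {ω | O₁ ω = 1} = ENNReal.ofReal θ₁)
    (hp₂ : μ {ω | O₂ ω = 1} = ENNReal.ofReal θ₂)
    (hind : IndepFun O₁ O₂ μ)
    (R₁ R₂ : ℝ) :
    ∫ ω, ((1 / (θ₁ * θ₂)) * (2 : ℝ) ^ (O₁ ω * R₁) *
          ((2 : ℝ) ^ (O₁ ω * O₂ ω * R₁ * R₂) - 1)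
        + (1 / θ₁) * ((2 : ℝ) ^ (O₁ ω * R₁) - 1)) ∂μ =
      (2 : ℝ) ^ (R₁ * (1 + R₂)) - 1 := by
  have hE₁ : ∫ ω, O₁ ω ∂μ = θ₁ := integral_eq_of_zero_or_one hθ₁.1.le hO₁ hm₁ hp₁
  have hE₂ : ∫ ω, O₂ ω ∂μ = θ₂ := integral_eq_of_zero_or_one hθ₂.1.le hO₂ hm₂ hp₂
  have hE₁₂ : ∫ ω, O₁ ω * O₂ ω ∂μ = θ₁ * θ₂ := by
    rw [hind.integral_fun_mul_eq_mul_integral hm₁.aestronglyMeasurable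
      hm₂.aestronglyMeasurable, hE₁, hE₂]
  have hlin : ∀ ω, (1 / (θ₁ * θ₂)) * (2 : ℝ) ^ (O₁ ω * R₁) *
        ((2 : ℝ) ^ (O₁ ω * O₂ ω * R₁ * R₂) - 1) + (1 / θ₁) * ((2 : ℝ) ^ (O₁ ω * R₁) - 1) =
      (2 ^ R₁ * (2 ^ (R₁ * R₂) - 1) / (θ₁ * θ₂)) * (O₁ ω * O₂ ω)
        + ((2 ^ R₁ - 1) / θ₁) * O₁ ω := by
    intro ω
    have hO₁₂ := mul_zero_or_one (hO₁ ω) (hO₂ ω)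
    rw [mul_assoc (O₁ ω * O₂ ω), rpow_mul_sub_one_of_zero_or_one hO₁₂,
      rpow_mul_sub_one_of_zero_or_one (hO₁ ω)]
    linear_combination (O₂ ω * (2 ^ (R₁ * R₂) - 1) / (θ₁ * θ₂)) *
      mul_rpow_mul_of_zero_or_one (hO₁ ω) 2 R₁
  have hI₁ := integrable_of_zero_or_one (μ := μ) hO₁ hm₁
  have hI₁₂ := integrable_of_zero_or_one (μ := μ) (fun ω => mul_zero_or_one (hO₁ ω) (hO₂ ω))
    (hm₁.mul hm₂)
  simp_rw [hlin]
  rw [integral_add (hI₁₂.const_mul _) (hI₁.const_mul _), integral_const_mul, integral_const_mul,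
    hE₁₂, hE₁, mul_add, mul_one, Real.rpow_add two_pos]
  field_simp [hθ₁.1.ne', hθ₂.1.ne']
  ring

theorem two_sided_ipw_unbiased
    {Ω : Type*} [MeasurableSpace Ω] (μ : Measure Ω) [IsProbabilityMeasure μ]
    (O₁ O₂ : Ω → ℝ) (θ₁ θ₂ : ℝ)
    (hθ₁ : θ₁ ∈ Set.Ioc (0 : ℝ) 1) (hθ₂ : θ₂ ∈ Set.Ioc (0 : ℝ) 1)
    (hO₁ : ∀ ω, O₁ ω = 0 ∨ O₁ ω = 1) (hO₂ : ∀ ω, O₂ ω = 0 ∨ O₂ ω = 1)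
    (hm₁ : Measurable O₁) (hm₂ : Measurable O₂)
    (hp₁ : μ {ω | O₁ ω = 1} = ENNReal.ofReal θ₁)
    (hp₂ : μ {ω | O₂ ω = 1} = ENNReal.ofReal θ₂)
    (hind : IndepFun O₁ O₂ μ)
    (R₁ R₂ : ℝ) (hR₁ : R₁ = 0 ∨ R₁ = 1) (hR₂ : R₂ = 0 ∨ R₂ = 1) :
    ∫ ω, ((1 / (θ₁ * θ₂)) * (2 : ℝ) ^ (O₁ ω * R₁) *
          ((2 : ℝ) ^ (O₁ ω * O₂ ω * R₁ * R₂) - 1)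
        + (1 / θ₁) * ((2 : ℝ) ^ (O₁ ω * R₁) - 1)) ∂μ =
      (2 : ℝ) ^ (R₁ * (1 + R₂)) - 1 :=
  two_sided_ipw_unbiased_general μ O₁ O₂ θ₁ θ₂ hθ₁ hθ₂ hO₁ hO₂ hm₁ hm₂ hp₁ hp₂ hind R₁ R₂
end

section
/- Let U be a finite nonempty set, and for each u ∈ U let V_u be a finite set. Suppose for each pair (u,v) with v ∈ V_u there are independent Bernoulli random variables O₁(u,v), O₂(u,v) with parameters θ₁(u,v), θ₂(u,v) ∈ (0,1], constants R₁(u,v), R₂(u,v) ∈ {0,1}, and weights λ(u,v) ≥ 0. Define Y₁ = O₁R₁, Y₂ = O₁O₂R₁R₂, and the two-sided IPW estimator R̂ = (1/|U|)·Σ_u Σ_{v∈V_u} λ(u,v)·[(1/(θ₁θ₂))·2^(Y₁)(2^(Y₂)-1) + (1/θ₁)(2^(Y₁)-1)]. Then E[R̂] = (1/|U|)·Σ_u Σ_{v∈V_u} λ(u,v)·(2^(R₁(1+R₂)) - 1). -/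
/-!
For exposures `O₁, O₂ ∈ {0,1}` the per-pair estimate is affine in `O₁ O₂` and `O₁`:
it equals `2^R₁ (2^(R₁R₂) - 1) / (θ₁θ₂) · O₁O₂ + (2^R₁ - 1) / θ₁ · O₁`. By independence
`E[O₁O₂] = θ₁θ₂` and `E[O₁] = θ₁`, so the propensities cancel and the expectation is
`2^R₁ 2^(R₁R₂) - 1 = 2^(R₁(1+R₂)) - 1`; linearity of the integral handles the sums.
-/

open MeasureTheory ProbabilityTheory

lemma mul_eq_zero_or_one {a b : ℝ} (ha : a = 0 ∨ a = 1) (hb : b = 0 ∨ b = 1) :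
    a * b = 0 ∨ a * b = 1 := by
  rcases ha with rfl | rfl <;> simp [hb]

lemma eq_indicator_one_of_forall_eq_zero_or_one {Ω : Type*} {f : Ω → ℝ}
    (h01 : ∀ ω, f ω = 0 ∨ f ω = 1) : f = {ω | f ω = 1}.indicator 1 := by
  funext ω
  rcases h01 ω with h | h <;> simp [h]

section ZeroOne

variable {Ω : Type*} [MeasurableSpace Ω] {μ : Measure Ω} {f : Ω → ℝ}

lemma integrable_of_forall_eq_zero_or_one [IsFiniteMeasure μ] (hf : Measurable f)
    (h01 : ∀ ω, f ω = 0 ∨ f ω = 1) : Integrable f μ := by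
  rw [eq_indicator_one_of_forall_eq_zero_or_one h01]
  exact (integrable_const 1).indicator (hf (measurableSet_singleton 1))

lemma integral_eq_of_forall_eq_zero_or_one {θ : ℝ} (hf : Measurable f)
    (h01 : ∀ ω, f ω = 0 ∨ f ω = 1) (hθ : 0 ≤ θ) (hp : μ {ω | f ω = 1} = ENNReal.ofReal θ) :
    ∫ ω, f ω ∂μ = θ := by
  have hs : MeasurableSet {ω | f ω = 1} := hf (measurableSet_singleton 1)
  conv_lhs => rw [eq_indicator_one_of_forall_eq_zero_or_one h01]
  rw [integral_indicator_one hs, measureReal_def, hp, ENNReal.toReal_ofReal hθ]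

end ZeroOne

noncomputable def twoSidedIPW (θ₁ θ₂ r₁ r₂ o₁ o₂ : ℝ) : ℝ :=
  1 / (θ₁ * θ₂) * (2 : ℝ) ^ (o₁ * r₁) * ((2 : ℝ) ^ (o₁ * o₂ * r₁ * r₂) - 1)
    + 1 / θ₁ * ((2 : ℝ) ^ (o₁ * r₁) - 1)

lemma twoSidedIPW_eq_of_eq_zero_or_one {o₁ o₂ : ℝ} (θ₁ θ₂ r₁ r₂ : ℝ)
    (ho₁ : o₁ = 0 ∨ o₁ = 1) (ho₂ : o₂ = 0 ∨ o₂ = 1) :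
    twoSidedIPW θ₁ θ₂ r₁ r₂ o₁ o₂ =
      (2 : ℝ) ^ r₁ * ((2 : ℝ) ^ (r₁ * r₂) - 1) / (θ₁ * θ₂) * (o₁ * o₂)
        + ((2 : ℝ) ^ r₁ - 1) / θ₁ * o₁ := by
  rcases ho₁ with rfl | rfl <;> rcases ho₂ with rfl | rfl <;>
    simp [twoSidedIPW, div_eq_inv_mul, mul_assoc]

section Bernoulli

variable {Ω : Type*} [MeasurableSpace Ω] {μ : Measure Ω} [IsProbabilityMeasure μ]
  {O₁ O₂ : Ω → ℝ} {θ₁ θ₂ : ℝ}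

lemma integrable_twoSidedIPW (r₁ r₂ : ℝ) (hm₁ : Measurable O₁) (hm₂ : Measurable O₂)
    (hO₁ : ∀ ω, O₁ ω = 0 ∨ O₁ ω = 1) (hO₂ : ∀ ω, O₂ ω = 0 ∨ O₂ ω = 1) :
    Integrable (fun ω ↦ twoSidedIPW θ₁ θ₂ r₁ r₂ (O₁ ω) (O₂ ω)) μ := by
  simp_rw [twoSidedIPW_eq_of_eq_zero_or_one θ₁ θ₂ r₁ r₂ (hO₁ _) (hO₂ _)]
  exact ((integrable_of_forall_eq_zero_or_one (hm₁.mul hm₂)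
    fun ω ↦ mul_eq_zero_or_one (hO₁ ω) (hO₂ ω)).const_mul _).add
    ((integrable_of_forall_eq_zero_or_one hm₁ hO₁).const_mul _)

lemma integral_twoSidedIPW (r₁ r₂ : ℝ) (hm₁ : Measurable O₁) (hm₂ : Measurable O₂)
    (hO₁ : ∀ ω, O₁ ω = 0 ∨ O₁ ω = 1) (hO₂ : ∀ ω, O₂ ω = 0 ∨ O₂ ω = 1)
    (hθ₁ : 0 < θ₁) (hθ₂ : 0 < θ₂)
    (hp₁ : μ {ω | O₁ ω = 1} = ENNReal.ofReal θ₁) (hp₂ : μ {ω | O₂ ω = 1} = ENNReal.ofReal θ₂)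
    (hind : IndepFun O₁ O₂ μ) :
    ∫ ω, twoSidedIPW θ₁ θ₂ r₁ r₂ (O₁ ω) (O₂ ω) ∂μ = (2 : ℝ) ^ (r₁ * (1 + r₂)) - 1 := by
  have hE₁ : ∫ ω, O₁ ω ∂μ = θ₁ := integral_eq_of_forall_eq_zero_or_one hm₁ hO₁ hθ₁.le hp₁
  have hE₂ : ∫ ω, O₂ ω ∂μ = θ₂ := integral_eq_of_forall_eq_zero_or_one hm₂ hO₂ hθ₂.le hp₂
  have hE₁₂ : ∫ ω, O₁ ω * O₂ ω ∂μ = θ₁ * θ₂ := by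
    rw [hind.integral_fun_mul_eq_mul_integral hm₁.aestronglyMeasurable
      hm₂.aestronglyMeasurable, hE₁, hE₂]
  simp_rw [twoSidedIPW_eq_of_eq_zero_or_one θ₁ θ₂ r₁ r₂ (hO₁ _) (hO₂ _)]
  have hi₁ : Integrable O₁ μ := integrable_of_forall_eq_zero_or_one hm₁ hO₁
  have hi₁₂ : Integrable (fun ω ↦ O₁ ω * O₂ ω) μ :=
    integrable_of_forall_eq_zero_or_one (hm₁.mul hm₂) fun ω ↦ mul_eq_zero_or_one (hO₁ ω) (hO₂ ω)
  rw [integral_add (hi₁₂.const_mul _) (hi₁.const_mul _), integral_const_mul, integral_const_mul,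
    hE₁₂, hE₁, mul_add, mul_one, Real.rpow_add two_pos]
  field_simp
  ring

end Bernoulli

theorem two_sided_ipw_metric_unbiased_general
    {Ω : Type*} [MeasurableSpace Ω] (μ : Measure Ω) [IsProbabilityMeasure μ]
    {ι κ : Type*} (U : Finset ι) (V : ι → Finset κ)
    (O₁ O₂ : ι → κ → Ω → ℝ) (θ₁ θ₂ lam R₁ R₂ : ι → κ → ℝ)
    (hθ₁ : ∀ u ∈ U, ∀ v ∈ V u, θ₁ u v ∈ Set.Ioc (0 : ℝ) 1)
    (hθ₂ : ∀ u ∈ U, ∀ v ∈ V u, θ₂ u v ∈ Set.Ioc (0 : ℝ) 1)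
    (hO₁ : ∀ u ∈ U, ∀ v ∈ V u, ∀ ω, O₁ u v ω = 0 ∨ O₁ u v ω = 1)
    (hO₂ : ∀ u ∈ U, ∀ v ∈ V u, ∀ ω, O₂ u v ω = 0 ∨ O₂ u v ω = 1)
    (hm₁ : ∀ u ∈ U, ∀ v ∈ V u, Measurable (O₁ u v))
    (hm₂ : ∀ u ∈ U, ∀ v ∈ V u, Measurable (O₂ u v))
    (hp₁ : ∀ u ∈ U, ∀ v ∈ V u, μ {ω | O₁ u v ω = 1} = ENNReal.ofReal (θ₁ u v))
    (hp₂ : ∀ u ∈ U, ∀ v ∈ V u, μ {ω | O₂ u v ω = 1} = ENNReal.ofReal (θ₂ u v))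
    (hind : ∀ u ∈ U, ∀ v ∈ V u, IndepFun (O₁ u v) (O₂ u v) μ) :
    ∫ ω, ((1 : ℝ) / U.card) * ∑ u ∈ U, ∑ v ∈ V u,
        lam u v * ((1 / (θ₁ u v * θ₂ u v)) * (2 : ℝ) ^ (O₁ u v ω * R₁ u v) *
            ((2 : ℝ) ^ (O₁ u v ω * O₂ u v ω * R₁ u v * R₂ u v) - 1)
          + (1 / θ₁ u v) * ((2 : ℝ) ^ (O₁ u v ω * R₁ u v) - 1)) ∂μ =
      ((1 : ℝ) / U.card) * ∑ u ∈ U, ∑ v ∈ V u,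
        lam u v * ((2 : ℝ) ^ (R₁ u v * (1 + R₂ u v)) - 1) := by
  change ∫ ω, _ * ∑ u ∈ U, ∑ v ∈ V u, lam u v * twoSidedIPW (θ₁ u v) (θ₂ u v) (R₁ u v) (R₂ u v)
    (O₁ u v ω) (O₂ u v ω) ∂μ = _
  have hint (u) (hu : u ∈ U) (v) (hv : v ∈ V u) : Integrable (fun ω ↦ lam u v *
      twoSidedIPW (θ₁ u v) (θ₂ u v) (R₁ u v) (R₂ u v) (O₁ u v ω) (O₂ u v ω)) μ :=
    (integrable_twoSidedIPW _ _ (hm₁ u hu v hv) (hm₂ u hu v hv) (hO₁ u hu v hv)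
      (hO₂ u hu v hv)).const_mul _
  rw [integral_const_mul, integral_finsetSum _ fun u hu ↦ integrable_finsetSum _ (hint u hu)]
  refine congrArg _ (Finset.sum_congr rfl fun u hu ↦ ?_)
  rw [integral_finsetSum _ (hint u hu)]
  refine Finset.sum_congr rfl fun v hv ↦ ?_
  rw [integral_const_mul, integral_twoSidedIPW _ _ (hm₁ u hu v hv) (hm₂ u hu v hv)
    (hO₁ u hu v hv) (hO₂ u hu v hv) (hθ₁ u hu v hv).1 (hθ₂ u hu v hv).1 (hp₁ u hu v hv)
    (hp₂ u hu v hv) (hind u hu v hv)]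

theorem two_sided_ipw_metric_unbiased
    {Ω : Type*} [MeasurableSpace Ω] (μ : Measure Ω) [IsProbabilityMeasure μ]
    {ι κ : Type*} (U : Finset ι) (hU : U.Nonempty) (V : ι → Finset κ)
    (O₁ O₂ : ι → κ → Ω → ℝ) (θ₁ θ₂ lam R₁ R₂ : ι → κ → ℝ)
    (hθ₁ : ∀ u ∈ U, ∀ v ∈ V u, θ₁ u v ∈ Set.Ioc (0 : ℝ) 1)
    (hθ₂ : ∀ u ∈ U, ∀ v ∈ V u, θ₂ u v ∈ Set.Ioc (0 : ℝ) 1)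
    (hlam : ∀ u ∈ U, ∀ v ∈ V u, 0 ≤ lam u v)
    (hR₁ : ∀ u ∈ U, ∀ v ∈ V u, R₁ u v = 0 ∨ R₁ u v = 1)
    (hR₂ : ∀ u ∈ U, ∀ v ∈ V u, R₂ u v = 0 ∨ R₂ u v = 1)
    (hO₁ : ∀ u ∈ U, ∀ v ∈ V u, ∀ ω, O₁ u v ω = 0 ∨ O₁ u v ω = 1)
    (hO₂ : ∀ u ∈ U, ∀ v ∈ V u, ∀ ω, O₂ u v ω = 0 ∨ O₂ u v ω = 1)
    (hm₁ : ∀ u ∈ U, ∀ v ∈ V u, Measurable (O₁ u v))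
    (hm₂ : ∀ u ∈ U, ∀ v ∈ V u, Measurable (O₂ u v))
    (hp₁ : ∀ u ∈ U, ∀ v ∈ V u, μ {ω | O₁ u v ω = 1} = ENNReal.ofReal (θ₁ u v))
    (hp₂ : ∀ u ∈ U, ∀ v ∈ V u, μ {ω | O₂ u v ω = 1} = ENNReal.ofReal (θ₂ u v))
    (hind : ∀ u ∈ U, ∀ v ∈ V u, IndepFun (O₁ u v) (O₂ u v) μ) :
    ∫ ω, ((1 : ℝ) / U.card) * ∑ u ∈ U, ∑ v ∈ V u,
        lam u v * ((1 / (θ₁ u v * θ₂ u v)) * (2 : ℝ) ^ (O₁ u v ω * R₁ u v) *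
            ((2 : ℝ) ^ (O₁ u v ω * O₂ u v ω * R₁ u v * R₂ u v) - 1)
          + (1 / θ₁ u v) * ((2 : ℝ) ^ (O₁ u v ω * R₁ u v) - 1)) ∂μ =
      ((1 : ℝ) / U.card) * ∑ u ∈ U, ∑ v ∈ V u,
        lam u v * ((2 : ℝ) ^ (R₁ u v * (1 + R₂ u v)) - 1) :=
  two_sided_ipw_metric_unbiased_general μ U V O₁ O₂ θ₁ θ₂ lam R₁ R₂ hθ₁ hθ₂ hO₁ hO₂ hm₁ hm₂ hp₁ hp₂
    hind
end
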